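/- arXiv:1301.0093 — 10 statements merged into one kernel-verified Lean document; each statement's English description precedes it below -/
import Mathlib

section
/- Let F be a sparseness measure with cost function J on ℝⁿ, let A be an m×n real matrix, let k ≥ 1, and let σ > 0 be such that ‖A u‖ ≥ σ‖u‖ for every u in the orthogonal complement of ker A. Suppose that for some d > 0 the robust null space condition with parameter d holds for (A, k, J). Then A satisfies RRC at sparsity k for J with constant C = 2(1+d)/(d σ). -/
noncomputable section

/-- `F : ℝ → ℝ` is a sparseness measure: nonnegative on `[0,∞)`,
vanishing exactly at `0`, and `F (|·|)` is subadditive on `ℝ`. -/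
def SparsenessMeasure (F : ℝ → ℝ) : Prop :=
  (∀ t : ℝ, 0 ≤ t → 0 ≤ F t) ∧
  (∀ t : ℝ, 0 ≤ t → (F t = 0 ↔ t = 0)) ∧
  (∀ x y : ℝ, F |x + y| ≤ F |x| + F |y|)

/-- The cost function `J(x) = ∑ i, F |x i|` on `ℝⁿ`. -/
def costJ {n : ℕ} (F : ℝ → ℝ) (x : EuclideanSpace ℝ (Fin n)) : ℝ :=
  ∑ i, F |x i|

/-- The restricted cost `J(x_T) = ∑ i ∈ T, F |x i|`. -/
def costJT {n : ℕ} (F : ℝ → ℝ) (T : Finset (Fin n)) (x : EuclideanSpace ℝ (Fin n)) : ℝ :=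
  ∑ i ∈ T, F |x i|

/-- `x` has at most `k` nonzero entries. -/
def Sparse {n : ℕ} (k : ℕ) (x : EuclideanSpace ℝ (Fin n)) : Prop :=
  ∃ T : Finset (Fin n), T.card ≤ k ∧ ∀ i ∉ T, x i = 0

/-- The matrix `A` acting as a continuous linear map between Euclidean spaces. -/
def mulVecCLM {m n : ℕ} (A : Matrix (Fin m) (Fin n) ℝ) :
    EuclideanSpace ℝ (Fin n) →L[ℝ] EuclideanSpace ℝ (Fin m) :=
  (((EuclideanSpace.equiv (Fin m) ℝ).symm : (Fin m → ℝ) →L[ℝ] EuclideanSpace ℝ (Fin m)).comp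
    (Matrix.mulVecLin A).toContinuousLinearMap).comp
    ((EuclideanSpace.equiv (Fin n) ℝ) : EuclideanSpace ℝ (Fin n) →L[ℝ] (Fin n → ℝ))

/-- `A` satisfies the robust recovery condition at sparsity `k` for the cost `J_F`
with constant `C`: for every `k`-sparse `x̄`, every `ε > 0`, every noise `v` with
`‖v‖ ≤ ε`, and every feasible `x̂` with `J(x̂) ≤ J(x̄)`, one has `‖x̄ - x̂‖ ≤ C ε`. -/
def RRC {m n : ℕ} (A : Matrix (Fin m) (Fin n) ℝ) (k : ℕ) (F : ℝ → ℝ) (C : ℝ) : Prop :=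
  ∀ xbar : EuclideanSpace ℝ (Fin n), Sparse k xbar →
    ∀ ε : ℝ, 0 < ε →
      ∀ v : EuclideanSpace ℝ (Fin m), ‖v‖ ≤ ε →
        ∀ xhat : EuclideanSpace ℝ (Fin n),
          ‖mulVecCLM A xhat - (mulVecCLM A xbar + v)‖ ≤ ε →
            costJ F xhat ≤ costJ F xbar → ‖xbar - xhat‖ ≤ C * ε

/-- The robust null space condition with parameter `d` for `(A, k, J_F)`. -/
def RNSP {m n : ℕ} (A : Matrix (Fin m) (Fin n) ℝ) (k : ℕ) (F : ℝ → ℝ) (d : ℝ) : Prop :=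
  ∀ z ∈ LinearMap.ker (mulVecCLM A : EuclideanSpace ℝ (Fin n) →ₗ[ℝ] EuclideanSpace ℝ (Fin m)), z ≠ 0 →
    ∀ η : EuclideanSpace ℝ (Fin n), ‖η‖ < d * ‖z‖ →
      ∀ T : Finset (Fin n), T.card ≤ k →
        costJT F T (z + η) < costJT F Tᶜ (z + η)

/-!
Write the error `h = x̄ - x̂` as `z + w` with `z ∈ ker A` and `w ⟂ ker A`. The bounds
`‖v‖ ≤ ε` and `‖A x̂ - (A x̄ + v)‖ ≤ ε` give `‖A w‖ = ‖A h‖ ≤ 2ε`, hence `σ‖w‖ ≤ 2ε`. Since `x̄` is supported on a set `T`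
of size at most `k` and `J(x̂) ≤ J(x̄)`, subadditivity of `F(|·|)` puts `h` in the cone
`J(h_{Tᶜ}) ≤ J(h_T)`, which the robust null space condition (for `z` perturbed by `w`) allows
only when `d‖z‖ ≤ ‖w‖`. Therefore `‖h‖ ≤ ‖z‖ + ‖w‖ ≤ (1 + 1/d)‖w‖ ≤ 2(1 + d)ε / (dσ)`.
-/

open Finset

section

variable {n : ℕ}

theorem costJ_eq_costJT_add_costJT_compl (F : ℝ → ℝ) (T : Finset (Fin n))
    (x : EuclideanSpace ℝ (Fin n)) : costJ F x = costJT F T x + costJT F Tᶜ x :=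
  (sum_add_sum_compl T _).symm

theorem costJT_compl_sub_le_costJT_sub {F : ℝ → ℝ} (hF0 : F 0 = 0)
    (hFsub : ∀ x y : ℝ, F |x + y| ≤ F |x| + F |y|) {T : Finset (Fin n)}
    {xbar xhat : EuclideanSpace ℝ (Fin n)} (hsupp : ∀ i ∉ T, xbar i = 0)
    (hcost : costJ F xhat ≤ costJ F xbar) :
    costJT F Tᶜ (xbar - xhat) ≤ costJT F T (xbar - xhat) := by
  have hbar_compl : costJT F Tᶜ xbar = 0 :=
    sum_eq_zero fun i hi => by simp [hsupp i (mem_compl.mp hi), hF0]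
  have hhat_compl : costJT F Tᶜ xhat = costJT F Tᶜ (xbar - xhat) :=
    sum_congr rfl fun i hi => by simp [hsupp i (mem_compl.mp hi)]
  have hbar_le : costJT F T xbar ≤ costJT F T xhat + costJT F T (xbar - xhat) := by
    rw [costJT, costJT, costJT, ← sum_add_distrib]
    refine sum_le_sum fun i _ => ?_
    simpa using hFsub (xhat i) (xbar i - xhat i)
  linarith [costJ_eq_costJT_add_costJT_compl F T xbar, costJ_eq_costJT_add_costJT_compl F T xhat]

theorem norm_sub_le_two_mul_of_norm_sub_add_le {E : Type*} [SeminormedAddCommGroup E]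
    {a b v : E} {ε : ℝ} (hab : ‖a - (b + v)‖ ≤ ε) (hv : ‖v‖ ≤ ε) : ‖b - a‖ ≤ 2 * ε :=
  calc ‖b - a‖ = ‖-(a - (b + v)) - v‖ := by congr 1; abel
    _ ≤ ‖a - (b + v)‖ + ‖v‖ := by simpa only [norm_neg] using norm_sub_le (-(a - (b + v))) v
    _ ≤ 2 * ε := by linarith

theorem RNSP.mul_norm_le {m k : ℕ} {A : Matrix (Fin m) (Fin n) ℝ} {F : ℝ → ℝ} {d : ℝ}
    (hrnsp : RNSP A k F d) {z : EuclideanSpace ℝ (Fin n)}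
    (hz : z ∈ LinearMap.ker (mulVecCLM A : EuclideanSpace ℝ (Fin n) →ₗ[ℝ] EuclideanSpace ℝ (Fin m)))
    (w : EuclideanSpace ℝ (Fin n)) {T : Finset (Fin n)} (hT : T.card ≤ k)
    (hcone : costJT F Tᶜ (z + w) ≤ costJT F T (z + w)) : d * ‖z‖ ≤ ‖w‖ := by
  by_contra! hlt
  have hz0 : z ≠ 0 := by
    rintro rfl
    simp only [norm_zero, mul_zero] at hlt
    exact (norm_nonneg w).not_gt hlt
  exact (hrnsp z hz hz0 w hlt T hT).not_ge hcone

theorem norm_add_le_of_mul_norm_le {E : Type*} [SeminormedAddCommGroup E] {z w : E}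
    {d σ δ : ℝ} (hd : 0 < d) (hσ : 0 < σ) (hzw : d * ‖z‖ ≤ ‖w‖) (hw : σ * ‖w‖ ≤ δ) :
    ‖z + w‖ ≤ (1 + d) / (d * σ) * δ := by
  rw [div_mul_eq_mul_div, le_div_iff₀ (mul_pos hd hσ)]
  calc ‖z + w‖ * (d * σ) ≤ (‖z‖ + ‖w‖) * (d * σ) := by gcongr; exact norm_add_le z w
    _ = σ * (d * ‖z‖) + d * (σ * ‖w‖) := by ring
    _ ≤ σ * ‖w‖ + d * (σ * ‖w‖) := by gcongr
    _ = (1 + d) * (σ * ‖w‖) := by ring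
    _ ≤ (1 + d) * δ := by gcongr

end

theorem stmt0_general {m n : ℕ} (F : ℝ → ℝ) (hF : SparsenessMeasure F)
    (A : Matrix (Fin m) (Fin n) ℝ) (k : ℕ)
    (σ : ℝ) (hσ : 0 < σ)
    (hσA : ∀ u ∈ (LinearMap.ker (mulVecCLM A : EuclideanSpace ℝ (Fin n) →ₗ[ℝ] EuclideanSpace ℝ (Fin m)))ᗮ, σ * ‖u‖ ≤ ‖mulVecCLM A u‖)
    (d : ℝ) (hd : 0 < d) (hrnsp : RNSP A k F d) :
    RRC A k F (2 * (1 + d) / (d * σ)) := by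
  obtain ⟨-, hFz, hFsub⟩ := hF
  rintro xbar ⟨T, hT, hsupp⟩ ε - v hv xhat hfeas hcost
  obtain ⟨z, hz, w, hw, hzw⟩ :=
    (LinearMap.ker (mulVecCLM A : EuclideanSpace ℝ (Fin n) →ₗ[ℝ] EuclideanSpace ℝ (Fin m))
      ).exists_add_mem_mem_orthogonal (xbar - xhat)
  have hAw : σ * ‖w‖ ≤ 2 * ε := by
    have hAz : mulVecCLM A z = 0 := hz
    have hAh := norm_sub_le_two_mul_of_norm_sub_add_le hfeas hv
    rw [← map_sub, hzw, map_add, hAz, zero_add] at hAh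
    exact (hσA w hw).trans hAh
  have hcone := costJT_compl_sub_le_costJT_sub ((hFz 0 le_rfl).mpr rfl) hFsub hsupp hcost
  rw [hzw] at hcone ⊢
  calc ‖z + w‖ ≤ (1 + d) / (d * σ) * (2 * ε) :=
        norm_add_le_of_mul_norm_le hd hσ (hrnsp.mul_norm_le hz w hT hcone) hAw
    _ = 2 * (1 + d) / (d * σ) * ε := by ring

/-- direct part of Theorem 1: if the robust null space condition with
parameter `d > 0` holds for `(A, k, J)`, and `σ > 0` satisfies `‖A u‖ ≥ σ ‖u‖` for all
`u ⟂ ker A`, then `A` satisfies RRC at sparsity `k` for `J` with `C = 2(1+d)/(dσ)`. -/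
theorem stmt0 {m n : ℕ} (F : ℝ → ℝ) (hF : SparsenessMeasure F)
    (A : Matrix (Fin m) (Fin n) ℝ) (k : ℕ) (hk : 1 ≤ k)
    (σ : ℝ) (hσ : 0 < σ)
    (hσA : ∀ u ∈ (LinearMap.ker (mulVecCLM A : EuclideanSpace ℝ (Fin n) →ₗ[ℝ] EuclideanSpace ℝ (Fin m)))ᗮ, σ * ‖u‖ ≤ ‖mulVecCLM A u‖)
    (d : ℝ) (hd : 0 < d) (hrnsp : RNSP A k F d) :
    RRC A k F (2 * (1 + d) / (d * σ)) :=
  stmt0_general F hF A k σ hσ hσA d hd hrnsp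
end
end

section
/- Let F be a sparseness measure with cost function J on ℝⁿ, let A be an m×n real matrix, let k ≥ 1, and let σmax > 0 be such that ‖A u‖ ≤ σmax‖u‖ for every u ∈ ℝⁿ. If for some d with 0 < d < 1 the matrix A satisfies RRC at sparsity k for J with constant C = 2(1−d)/(d σmax), then the robust null space condition with parameter d holds for (A, k, J). -/
noncomputable section

/-!
Suppose the null space condition fails: some `z ∈ ker A`, `z ≠ 0`, perturbation `η` with
`‖η‖ < d‖z‖` and `|T| ≤ k` have `J(w_{Tᶜ}) ≤ J(w_T)` for `w = z + η`. Then `w_T` is `k`-sparse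
and `-w_{Tᶜ}` is a cheaper candidate which, with noise `v = -A w / 2`, is feasible at every
`ε ≥ ‖A w‖ / 2`. RRC gives `‖w‖ ≤ (C/2)‖A w‖ = (C/2)‖A η‖ ≤ (C σmax/2)‖η‖ < (1 - d)‖z‖`,
contradicting `‖w‖ ≥ ‖z‖ - ‖η‖ > (1 - d)‖z‖`.
-/

open Filter Topology

namespace EuclideanSpace

variable {n : ℕ}

def finsetIndicator (T : Finset (Fin n)) (x : EuclideanSpace ℝ (Fin n)) :
    EuclideanSpace ℝ (Fin n) :=
  WithLp.toLp 2 fun i => if i ∈ T then x i else 0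

@[simp]
theorem finsetIndicator_apply (T : Finset (Fin n)) (x : EuclideanSpace ℝ (Fin n)) (i : Fin n) :
    finsetIndicator T x i = if i ∈ T then x i else 0 :=
  rfl

theorem finsetIndicator_add_finsetIndicator_compl (T : Finset (Fin n))
    (x : EuclideanSpace ℝ (Fin n)) : finsetIndicator T x + finsetIndicator Tᶜ x = x := by
  ext i
  by_cases hi : i ∈ T <;> simp [hi]

theorem sparse_finsetIndicator {k : ℕ} {T : Finset (Fin n)} (hT : T.card ≤ k)
    (x : EuclideanSpace ℝ (Fin n)) : Sparse k (finsetIndicator T x) :=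
  ⟨T, hT, fun i hi => by simp [hi]⟩

end EuclideanSpace

open EuclideanSpace

section Cost

variable {n : ℕ} {F : ℝ → ℝ}

theorem SparsenessMeasure.map_zero (hF : SparsenessMeasure F) : F 0 = 0 :=
  (hF.2.1 0 le_rfl).mpr rfl

theorem costJ_neg (x : EuclideanSpace ℝ (Fin n)) : costJ F (-x) = costJ F x := by
  simp [costJ]

theorem costJ_finsetIndicator (hF0 : F 0 = 0) (T : Finset (Fin n))
    (x : EuclideanSpace ℝ (Fin n)) : costJ F (finsetIndicator T x) = costJT F T x := by
  simp only [costJ, costJT, finsetIndicator_apply, apply_ite, abs_zero, hF0]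
  rw [Finset.sum_ite_mem, Finset.univ_inter]

end Cost

namespace RRC

variable {m n k : ℕ} {A : Matrix (Fin m) (Fin n) ℝ} {F : ℝ → ℝ} {C : ℝ}
  {T : Finset (Fin n)} {w : EuclideanSpace ℝ (Fin n)}

theorem norm_le_mul_of_costJT_compl_le (hrrc : RRC A k F C) (hF0 : F 0 = 0)
    (hT : T.card ≤ k) (hw : costJT F Tᶜ w ≤ costJT F T w) {ε : ℝ} (hε : 0 < ε)
    (hAw : ‖mulVecCLM A w‖ ≤ 2 * ε) : ‖w‖ ≤ C * ε := by
  set xbar := finsetIndicator T w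
  set xhat := -finsetIndicator Tᶜ w
  set v : EuclideanSpace ℝ (Fin m) := -((1 / 2 : ℝ) • mulVecCLM A w)
  have hsplit : xbar - xhat = w := by
    simp only [xbar, xhat, sub_neg_eq_add, finsetIndicator_add_finsetIndicator_compl]
  have hv : ‖v‖ ≤ ε := by
    rw [norm_neg, norm_smul, Real.norm_of_nonneg (by norm_num)]
    linarith
  have hresidual : mulVecCLM A xhat - (mulVecCLM A xbar + v) = v := by
    have hAsplit : mulVecCLM A xbar - mulVecCLM A xhat = mulVecCLM A w := by
      rw [← map_sub, hsplit]
    rw [show mulVecCLM A xhat - (mulVecCLM A xbar + v)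
        = -(mulVecCLM A xbar - mulVecCLM A xhat) - v by abel, hAsplit]
    simp only [v]
    module
  have hcost : costJ F xhat ≤ costJ F xbar := by
    simpa only [xhat, xbar, costJ_neg, costJ_finsetIndicator hF0] using hw
  have hrec :=
    hrrc xbar (sparse_finsetIndicator hT w) ε hε v hv xhat (hresidual.symm ▸ hv) hcost
  rwa [hsplit] at hrec

theorem norm_le_half_mul_norm_mulVecCLM_of_costJT_compl_le (hrrc : RRC A k F C)
    (hF0 : F 0 = 0) (hT : T.card ≤ k) (hw : costJT F Tᶜ w ≤ costJT F T w) :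
    ‖w‖ ≤ C / 2 * ‖mulVecCLM A w‖ := by
  set a := ‖mulVecCLM A w‖ / 2 with ha
  have hlim : Tendsto (fun ε => C * ε) (𝓝[>] a) (𝓝 (C * a)) :=
    ((continuous_const.mul continuous_id).tendsto a).mono_left nhdsWithin_le_nhds
  have hbound : ∀ᶠ ε in 𝓝[>] a, ‖w‖ ≤ C * ε :=
    eventually_nhdsWithin_of_forall fun ε (hε : a < ε) =>
      hrrc.norm_le_mul_of_costJT_compl_le hF0 hT hw
        ((div_nonneg (norm_nonneg _) zero_le_two).trans_lt hε) (by linarith)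
  exact (ge_of_tendsto hlim hbound).trans_eq (by ring)

end RRC

theorem stmt1_general {m n : ℕ} (F : ℝ → ℝ) (hF : SparsenessMeasure F)
    (A : Matrix (Fin m) (Fin n) ℝ) (k : ℕ)
    (σmax : ℝ) (hσ : 0 < σmax)
    (hσA : ∀ u : EuclideanSpace ℝ (Fin n), ‖mulVecCLM A u‖ ≤ σmax * ‖u‖)
    (d : ℝ) (hd0 : 0 < d) (hd1 : d < 1)
    (hrrc : RRC A k F (2 * (1 - d) / (d * σmax))) :
    RNSP A k F d := by
  intro z hz _ η hη T hT
  by_contra! hcost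
  have hAw : mulVecCLM A (z + η) = mulVecCLM A η := by
    rw [map_add, show mulVecCLM A z = 0 from hz, zero_add]
  have hC : 0 < 2 * (1 - d) / (d * σmax) / 2 := by
    have : 0 < 1 - d := by linarith
    positivity
  have hw : ‖z + η‖ < (1 - d) * ‖z‖ :=
    calc ‖z + η‖ ≤ 2 * (1 - d) / (d * σmax) / 2 * ‖mulVecCLM A η‖ :=
          hAw ▸ hrrc.norm_le_half_mul_norm_mulVecCLM_of_costJT_compl_le hF.map_zero hT hcost
      _ ≤ 2 * (1 - d) / (d * σmax) / 2 * (σmax * ‖η‖) := by gcongr; exact hσA η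
      _ < 2 * (1 - d) / (d * σmax) / 2 * (σmax * (d * ‖z‖)) := by gcongr
      _ = (1 - d) * ‖z‖ := by field_simp
  have htriangle : ‖z‖ ≤ ‖z + η‖ + ‖η‖ := by simpa using norm_sub_le (z + η) η
  linarith

/-- converse part of Theorem 1: if `‖A u‖ ≤ σmax ‖u‖` for all `u`,
`0 < d < 1`, and `A` satisfies RRC at sparsity `k` for `J` with `C = 2(1−d)/(d σmax)`,
then the robust null space condition with parameter `d` holds for `(A, k, J)`. -/
theorem stmt1 {m n : ℕ} (F : ℝ → ℝ) (hF : SparsenessMeasure F)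
    (A : Matrix (Fin m) (Fin n) ℝ) (k : ℕ) (hk : 1 ≤ k)
    (σmax : ℝ) (hσ : 0 < σmax)
    (hσA : ∀ u : EuclideanSpace ℝ (Fin n), ‖mulVecCLM A u‖ ≤ σmax * ‖u‖)
    (d : ℝ) (hd0 : 0 < d) (hd1 : d < 1)
    (hrrc : RRC A k F (2 * (1 - d) / (d * σmax))) :
    RNSP A k F d :=
  stmt1_general F hF A k σmax hσ hσA d hd0 hd1 hrrc
end
end

section
/- Let 0 < p ≤ 1 and let J(x) = ∑_{i=1}^n |x_i|^p be the ℓ_p cost function on ℝⁿ. Let A be an m×n real matrix and k ≥ 1. If ker A satisfies NSP at sparsity k for J (i.e., for every z ∈ ker A with z ≠ 0 and every T with |T| ≤ k, ∑_{i∈T}|z_i|^p < ∑_{i∉T}|z_i|^p), then A satisfies RRC at sparsity k for J with some constant C > 0. (Exact recoverability and robust recoverability are equivalent for ℓ_p-minimization.) -/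
noncomputable section

/-!
Let `x̄` be `k`-sparse with support in `T` and let `x̂` be feasible with `J(x̂) ≤ J(x̄)`. Since
`|·|^p` is subadditive for `p ≤ 1`, the error `w = x̄ - x̂` satisfies `J(w_{Tᶜ}) ≤ J(w_T)`, i.e. it
lies in the cone of vectors violating the null space property. This cone is closed and invariant
under positive scaling (`J` is `p`-homogeneous), and by the null space property it meets `ker A`
only at `0`. Compactness of its intersection with the unit sphere gives `c > 0` with
`c ‖w‖ ≤ ‖A w‖` on the cone, while `‖A w‖ ≤ 2ε` by the triangle inequality; so `C = 2 / c` works.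
-/

open Finset

theorem exists_pos_mul_norm_le_norm_of_isClosed_cone {E F : Type*} [NormedAddCommGroup E]
    [NormedSpace ℝ E] [FiniteDimensional ℝ E] [NormedAddCommGroup F] [NormedSpace ℝ F]
    (L : E →L[ℝ] F) {S : Set E} (hS : IsClosed S) (hcone : ∀ w ∈ S, ∀ t : ℝ, 0 < t → t • w ∈ S)
    (hker : ∀ w ∈ S, L w = 0 → w = 0) :
    ∃ c > 0, ∀ w ∈ S, c * ‖w‖ ≤ ‖L w‖ := by
  have hK : IsCompact (S ∩ Metric.sphere (0 : E) 1) := (isCompact_sphere 0 1).inter_left hS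
  have hpos : ∀ u ∈ S ∩ Metric.sphere 0 1, 0 < ‖L u‖ := by
    rintro u ⟨huS, hu⟩
    refine norm_pos_iff.2 fun hLu => ?_
    simp [hker u huS hLu] at hu
  obtain ⟨c, hc, hcK⟩ := hK.exists_forall_le' L.continuous.norm.continuousOn hpos
  refine ⟨c, hc, fun w hw => ?_⟩
  rcases eq_or_ne w 0 with rfl | hw0
  · simp
  have hwn : 0 < ‖w‖ := norm_pos_iff.2 hw0
  have hu := hcK (‖w‖⁻¹ • w) ⟨hcone w hw _ (inv_pos.2 hwn), by simp [norm_smul, hwn.ne']⟩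
  rw [map_smul, norm_smul, norm_inv, norm_norm, le_inv_mul_iff₀ hwn] at hu
  linarith

theorem norm_map_sub_le_two_mul {G H 𝓕 : Type*} [SeminormedAddCommGroup G]
    [SeminormedAddCommGroup H] [FunLike 𝓕 G H] [AddMonoidHomClass 𝓕 G H] (L : 𝓕) {x y : G}
    {v : H} {ε : ℝ} (hfeas : ‖L x - (L y + v)‖ ≤ ε) (hv : ‖v‖ ≤ ε) :
    ‖L (y - x)‖ ≤ 2 * ε := by
  have hL : L (y - x) = -((L x - (L y + v)) + v) := by rw [map_sub]; abel
  rw [hL, norm_neg, two_mul]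
  exact (norm_add_le _ _).trans (add_le_add hfeas hv)

theorem abs_add_rpow_le {p : ℝ} (hp0 : 0 ≤ p) (hp1 : p ≤ 1) (x y : ℝ) :
    |x + y| ^ p ≤ |x| ^ p + |y| ^ p :=
  (Real.rpow_le_rpow (abs_nonneg _) (abs_add_le x y) hp0).trans
    (Real.rpow_add_le_add_rpow (abs_nonneg _) (abs_nonneg _) hp0 hp1)

section NspCone

variable {n : ℕ}

/-- The vectors at which the null space property at sparsity `k` fails. -/
def nspCone (F : ℝ → ℝ) (k : ℕ) : Set (EuclideanSpace ℝ (Fin n)) :=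
  {w | ∃ T : Finset (Fin n), T.card ≤ k ∧ costJT F Tᶜ w ≤ costJT F T w}

theorem continuous_costJT {F : ℝ → ℝ} (hF : Continuous F) (T : Finset (Fin n)) :
    Continuous (costJT F T) :=
  continuous_finsetSum _ fun i _ => hF.comp (EuclideanSpace.proj i).continuous.abs

theorem isClosed_nspCone {F : ℝ → ℝ} (hF : Continuous F) (k : ℕ) :
    IsClosed (nspCone (n := n) F k) := by
  have hS : nspCone (n := n) F k =
      ⋃ T : Finset (Fin n), ⋃ (_ : T.card ≤ k), {w | costJT F Tᶜ w ≤ costJT F T w} := by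
    ext w
    simp [nspCone]
  rw [hS]
  exact isClosed_iUnion_of_finite fun T => isClosed_iUnion_of_finite fun _ =>
    isClosed_le (continuous_costJT hF Tᶜ) (continuous_costJT hF T)

theorem sub_mem_nspCone {F : ℝ → ℝ} (hF0 : F 0 = 0) (hF : ∀ x y, F |x + y| ≤ F |x| + F |y|)
    {k : ℕ} {xbar xhat : EuclideanSpace ℝ (Fin n)} (hsparse : Sparse k xbar)
    (hJ : costJ F xhat ≤ costJ F xbar) : xbar - xhat ∈ nspCone F k := by
  obtain ⟨T, hTk, hT⟩ := hsparse
  refine ⟨T, hTk, ?_⟩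
  have hsplit : ∀ x, costJ F x = costJT F T x + costJT F Tᶜ x :=
    fun x => (sum_add_sum_compl T _).symm
  have hbar : costJT F Tᶜ xbar = 0 :=
    sum_eq_zero fun i hi => by simp [hT i (mem_compl.1 hi), hF0]
  have hhat : costJT F Tᶜ xhat = costJT F Tᶜ (xbar - xhat) :=
    sum_congr rfl fun i hi => by simp [hT i (mem_compl.1 hi)]
  have htri : costJT F T xbar ≤ costJT F T xhat + costJT F T (xbar - xhat) := by
    rw [costJT, costJT, costJT, ← sum_add_distrib]
    exact sum_le_sum fun i _ => by simpa using hF (xhat i) (xbar i - xhat i)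
  linarith [hsplit xbar, hsplit xhat]

theorem costJT_abs_rpow_smul (p : ℝ) {c : ℝ} (hc : 0 ≤ c) (T : Finset (Fin n))
    (w : EuclideanSpace ℝ (Fin n)) :
    costJT (fun t => |t| ^ p) T (c • w) = c ^ p * costJT (fun t => |t| ^ p) T w := by
  simp only [costJT, PiLp.smul_apply, smul_eq_mul, abs_mul, abs_abs, abs_of_nonneg hc,
    Real.mul_rpow hc (abs_nonneg _), mul_sum]

theorem smul_mem_nspCone_abs_rpow {p c : ℝ} (hc : 0 ≤ c) {k : ℕ} {w : EuclideanSpace ℝ (Fin n)}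
    (hw : w ∈ nspCone (fun t => |t| ^ p) k) : c • w ∈ nspCone (fun t => |t| ^ p) k := by
  obtain ⟨T, hTk, hle⟩ := hw
  refine ⟨T, hTk, ?_⟩
  rw [costJT_abs_rpow_smul p hc, costJT_abs_rpow_smul p hc]
  exact mul_le_mul_of_nonneg_left hle (Real.rpow_nonneg hc p)

end NspCone

theorem stmt6_general {m n : ℕ} (p : ℝ) (hp0 : 0 < p) (hp1 : p ≤ 1)
    (A : Matrix (Fin m) (Fin n) ℝ) (k : ℕ)
    (hnsp : ∀ z ∈ LinearMap.ker (mulVecCLM A : EuclideanSpace ℝ (Fin n) →ₗ[ℝ] EuclideanSpace ℝ (Fin m)), z ≠ 0 →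
      ∀ T : Finset (Fin n), T.card ≤ k →
        ∑ i ∈ T, |z i| ^ p < ∑ i ∈ Tᶜ, |z i| ^ p) :
    ∃ C > 0, RRC A k (fun t => |t| ^ p) C := by
  have hker : ∀ w ∈ nspCone (fun t => |t| ^ p) k, mulVecCLM A w = 0 → w = 0 := by
    rintro w ⟨T, hTk, hle⟩ hAw
    by_contra hw0
    exact hle.not_gt (by simpa [costJT] using hnsp w hAw hw0 T hTk)
  obtain ⟨c, hc, hbound⟩ := exists_pos_mul_norm_le_norm_of_isClosed_cone (mulVecCLM A)
    (isClosed_nspCone (continuous_abs.rpow_const fun _ => Or.inr hp0.le) k)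
    (fun w hw t ht => smul_mem_nspCone_abs_rpow ht.le hw) hker
  refine ⟨2 / c, by positivity, fun xbar hsparse ε _ v hv xhat hfeas hJ => ?_⟩
  have hcone := hbound _ (sub_mem_nspCone (by simp [hp0.ne'])
    (by simpa using abs_add_rpow_le hp0.le hp1) hsparse hJ)
  have hnoise := norm_map_sub_le_two_mul (mulVecCLM A) hfeas hv
  rw [div_mul_eq_mul_div, le_div_iff₀ hc]
  linarith

/-- Corollary: equivalence of ERC and RRC for `ℓ_p`-minimization:
if `0 < p ≤ 1` and the kernel of `A` satisfies the null space property at sparsity `k`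
for the `ℓ_p` cost function, then `A` satisfies RRC at sparsity `k` for the `ℓ_p` cost
function with some constant `C > 0`. -/
theorem stmt6 {m n : ℕ} (p : ℝ) (hp0 : 0 < p) (hp1 : p ≤ 1)
    (A : Matrix (Fin m) (Fin n) ℝ) (k : ℕ) (hk : 1 ≤ k)
    (hnsp : ∀ z ∈ LinearMap.ker (mulVecCLM A : EuclideanSpace ℝ (Fin n) →ₗ[ℝ] EuclideanSpace ℝ (Fin m)), z ≠ 0 →
      ∀ T : Finset (Fin n), T.card ≤ k →
        ∑ i ∈ T, |z i| ^ p < ∑ i ∈ Tᶜ, |z i| ^ p) :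
    ∃ C > 0, RRC A k (fun t => |t| ^ p) C :=
  stmt6_general p hp0 hp1 A k hnsp
end
end

section
/- Let F(t) = t + 1 − e^{−t} for t ≥ 0 and J(w) = ∑_{i=1}^3 F(|w_i|) on ℝ³. Let x, y > 0, z = x + y, and let ν = ℝ·(x, y, z) be the one-dimensional subspace of ℝ³ spanned by (x, y, z). Then ν satisfies NSP at sparsity k = 1 for J: for every w ∈ ν with w ≠ 0 and every index set T ⊆ {1,2,3} with |T| ≤ 1, J(w_T) < J(w_{T^c}). -/
/-!
On the line spanned by `(x, y, x + y)` every nonzero vector has coordinates of absolute values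
`a, b, a + b` with `a, b > 0`. At sparsity one the null space property asks that `J` of the
whole vector be positive and exceed twice any single term. Since `F` is strictly increasing with
`F 0 = 0`, `F a` and `F b` are each smaller than `F (a + b)`; the remaining inequality
`F (a + b) < F a + F b` is strict subadditivity, which for `F t = t + 1 - e^{-t}` reads
`(1 - e^{-a}) (1 - e^{-b}) > 0`.
-/

noncomputable section

/-- The sparseness measure `F(t) = t + 1 − e^{−t}` from Counter-example 1. -/
def F7 (t : ℝ) : ℝ := t + 1 - Real.exp (-t)

open Finset

lemma F7_strictMono : StrictMono F7 := fun a b hab => by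
  have := Real.exp_lt_exp.mpr (neg_lt_neg hab)
  unfold F7; linarith

lemma F7_pos {t : ℝ} (ht : 0 < t) : 0 < F7 t := by
  simpa [F7] using F7_strictMono ht

lemma F7_add_lt {a b : ℝ} (ha : 0 < a) (hb : 0 < b) : F7 (a + b) < F7 a + F7 b := by
  have hea : Real.exp (-a) < 1 := Real.exp_lt_one_iff.mpr (neg_neg_of_pos ha)
  have heb : Real.exp (-b) < 1 := Real.exp_lt_one_iff.mpr (neg_neg_of_pos hb)
  have hprod : 0 < (1 - Real.exp (-a)) * (1 - Real.exp (-b)) :=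
    mul_pos (sub_pos.mpr hea) (sub_pos.mpr heb)
  rw [F7, F7, F7, neg_add, Real.exp_add]
  linarith

lemma costJT_add_costJT_compl {n : ℕ} (F : ℝ → ℝ) (T : Finset (Fin n))
    (w : EuclideanSpace ℝ (Fin n)) :
    costJT F T w + costJT F Tᶜ w = ∑ i, F |w i| :=
  sum_add_sum_compl T _

lemma costJT_lt_costJT_compl_of_card_le_one {n : ℕ} {F : ℝ → ℝ}
    {w : EuclideanSpace ℝ (Fin n)} (hpos : 0 < ∑ i, F |w i|)
    (hdom : ∀ i, 2 * F |w i| < ∑ j, F |w j|) {T : Finset (Fin n)} (hT : T.card ≤ 1) :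
    costJT F T w < costJT F Tᶜ w := by
  have htotal := costJT_add_costJT_compl F T w
  rcases Nat.le_one_iff_eq_zero_or_eq_one.mp hT with hT | hT
  · obtain rfl := card_eq_zero.mp hT
    simp only [costJT, sum_empty] at htotal ⊢
    linarith
  · obtain ⟨i, rfl⟩ := card_eq_one.mp hT
    simp only [costJT, sum_singleton] at htotal ⊢
    linarith [hdom i]

lemma abs_smul_toLp_apply {x y : ℝ} (hx : 0 < x) (hy : 0 < y) (c : ℝ) (i : Fin 3) :
    |(c • (WithLp.toLp 2 ![x, y, x + y] : EuclideanSpace ℝ (Fin 3))) i| =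
      ![|c| * x, |c| * y, |c| * x + |c| * y] i := by
  fin_cases i <;>
    simp [abs_mul, abs_of_pos hx, abs_of_pos hy, abs_of_pos (add_pos hx hy), ← mul_add]

lemma sum_F7_vecCons_pos {a b : ℝ} (ha : 0 < a) (hb : 0 < b) :
    0 < ∑ i, F7 (![a, b, a + b] i) :=
  sum_pos (fun i _ => by fin_cases i <;> simp [F7_pos, ha, hb, add_pos]) univ_nonempty

lemma two_mul_F7_lt_sum {a b : ℝ} (ha : 0 < a) (hb : 0 < b) (i : Fin 3) :
    2 * F7 (![a, b, a + b] i) < ∑ j, F7 (![a, b, a + b] j) := by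
  have hFa := F7_pos ha
  have hFb := F7_pos hb
  have hab := F7_strictMono (lt_add_of_pos_right a hb)
  have hba := F7_strictMono (lt_add_of_pos_left b ha)
  have hsub := F7_add_lt ha hb
  simp only [Fin.sum_univ_three]
  fin_cases i <;>
    simp only [Fin.zero_eta, Fin.mk_one, Fin.reduceFinMk, Matrix.cons_val] <;> linarith

/-- Counter-example 1, ERC part: with `F(t) = t + 1 − e^{−t}`,
`x, y > 0` and `z = x + y`, the line `ν = ℝ·(x, y, z)` in `ℝ³` satisfies NSP at
sparsity `k = 1` for `J`: for every nonzero `w ∈ ν` and every `T ⊆ {1,2,3}` with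
`|T| ≤ 1`, `J(w_T) < J(w_{T^c})`. -/
theorem stmt7 (x y : ℝ) (hx : 0 < x) (hy : 0 < y) :
    ∀ w : EuclideanSpace ℝ (Fin 3),
      w ∈ Submodule.span ℝ {(WithLp.toLp 2 ![x, y, x + y] : EuclideanSpace ℝ (Fin 3))} → w ≠ 0 →
      ∀ T : Finset (Fin 3), T.card ≤ 1 →
        costJT F7 T w < costJT F7 Tᶜ w := by
  intro w hw hw0 T hT
  obtain ⟨c, rfl⟩ := Submodule.mem_span_singleton.mp hw
  have hc : 0 < |c| := abs_pos.mpr (by rintro rfl; exact hw0 (zero_smul ℝ _))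
  have ha := mul_pos hc hx
  have hb := mul_pos hc hy
  refine costJT_lt_costJT_compl_of_card_le_one ?_ ?_ hT
  · simpa only [abs_smul_toLp_apply hx hy c] using sum_F7_vecCons_pos ha hb
  · simpa only [abs_smul_toLp_apply hx hy c] using two_mul_F7_lt_sum ha hb
end
end

section
/- Let F(t) = t + 1 − e^{−t} for t ≥ 0 and J(w) = ∑_{i=1}^3 F(|w_i|) on ℝ³. Let x, y > 0, z = x + y, and let ν = ℝ·(x, y, z) be the one-dimensional subspace of ℝ³ spanned by (x, y, z). Then for every d > 0 there exist w ∈ ν with w ≠ 0, η ∈ ℝ³ with ‖η‖ < d‖w‖ (Euclidean norms), and T ⊆ {1,2,3} with |T| ≤ 1, such that J((w+η)_T) ≥ J((w+η)_{T^c}). (Hence the robust null space condition fails for every parameter d > 0, so this null space satisfies the exact recovery condition but not the robust recovery condition.) -/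
/-!
On the null space vector `t • (x, y, x + y)` the cost of the two small coordinates exceeds that of
the large one by `F(tx) + F(ty) - F(t(x + y)) = (1 - e^{-tx})(1 - e^{-ty}) ≤ t²xy`. Since `F` has
slope at least `1`, raising the large coordinate by `t²xy` compensates this excess. The perturbation
is quadratic in `t` while the vector is linear in `t`, so for small `t` it is shorter than `d` times
the vector.
-/

noncomputable section

lemma F7_add_F7 (a b : ℝ) :
    F7 a + F7 b = F7 (a + b) + (1 - Real.exp (-a)) * (1 - Real.exp (-b)) := by
  simp only [F7, neg_add, Real.exp_add]
  ring

lemma F7_add_le_F7_add {s ε : ℝ} (hε : 0 ≤ ε) : F7 s + ε ≤ F7 (s + ε) := by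
  have : Real.exp (-(s + ε)) ≤ Real.exp (-s) := Real.exp_le_exp.mpr (by linarith)
  simp only [F7]
  linarith

lemma one_sub_exp_neg_le (a : ℝ) : 1 - Real.exp (-a) ≤ a := by
  linarith [Real.add_one_le_exp (-a)]

lemma F7_add_F7_le {a b : ℝ} (ha : 0 ≤ a) (hb : 0 ≤ b) : F7 a + F7 b ≤ F7 (a + b + a * b) := by
  have hprod : (1 - Real.exp (-a)) * (1 - Real.exp (-b)) ≤ a * b :=
    mul_le_mul (one_sub_exp_neg_le a) (one_sub_exp_neg_le b)
      (by simpa using Real.exp_le_one_iff.mpr (neg_nonpos.mpr hb)) ha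
  calc F7 a + F7 b ≤ F7 (a + b) + a * b := by rw [F7_add_F7]; linarith
    _ ≤ F7 (a + b + a * b) := F7_add_le_F7_add (mul_nonneg ha hb)

lemma costJT_compl_singleton_two (F : ℝ → ℝ) (v : EuclideanSpace ℝ (Fin 3)) :
    costJT F ({2}ᶜ : Finset (Fin 3)) v = F |v 0| + F |v 1| := by
  rw [costJT, show ({2}ᶜ : Finset (Fin 3)) = {0, 1} by decide, Finset.sum_pair (by decide)]

/-- Counter-example 1, failure of RRC: with `F(t) = t + 1 − e^{−t}`,
`x, y > 0`, `z = x + y`, and `ν = ℝ·(x, y, z)` in `ℝ³`, for every `d > 0` there exist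
`w ∈ ν`, `w ≠ 0`, a perturbation `η` with `‖η‖ < d‖w‖`, and `T` with `|T| ≤ 1`
such that `J((w+η)_T) ≥ J((w+η)_{T^c})`; hence the robust null space condition fails
for every parameter `d > 0`. -/
theorem stmt8 (x y : ℝ) (hx : 0 < x) (hy : 0 < y) (d : ℝ) (hd : 0 < d) :
    ∃ w : EuclideanSpace ℝ (Fin 3),
      w ∈ Submodule.span ℝ {(WithLp.toLp 2 ![x, y, x + y] : EuclideanSpace ℝ (Fin 3))} ∧ w ≠ 0 ∧
      ∃ η : EuclideanSpace ℝ (Fin 3), ‖η‖ < d * ‖w‖ ∧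
        ∃ T : Finset (Fin 3), T.card ≤ 1 ∧
          costJT F7 Tᶜ (w + η) ≤ costJT F7 T (w + η) := by
  set v : EuclideanSpace ℝ (Fin 3) := WithLp.toLp 2 ![x, y, x + y]
  have hv : v ≠ 0 := fun h => hx.ne' (congrArg (· 0) h)
  have hv_norm : 0 < ‖v‖ := norm_pos_iff.mpr hv
  -- chosen so that the perturbation `t²xy` is half of `d * ‖t • v‖`
  set t := d * ‖v‖ / (2 * x * y)
  have ht : 0 < t := by positivity
  set ε := t * x * (t * y)
  set η : EuclideanSpace ℝ (Fin 3) := EuclideanSpace.single 2 ε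
  refine ⟨t • v, Submodule.smul_mem _ t (Submodule.mem_span_singleton_self v), smul_ne_zero ht.ne' hv,
    η, ?_, {2}, by decide, ?_⟩
  · have hε : ε = d * (t * ‖v‖) / 2 := by simp only [ε, t]; field_simp
    rw [PiLp.norm_single, norm_smul, Real.norm_of_nonneg ht.le, Real.norm_of_nonneg (by positivity),
      hε]
    linarith [mul_pos hd (mul_pos ht hv_norm)]
  · have h0 : (t • v + η) 0 = t * x := by simp [v, η]
    have h1 : (t • v + η) 1 = t * y := by simp [v, η]
    have h2 : (t • v + η) 2 = t * x + t * y + ε := by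
      simp only [PiLp.add_apply, PiLp.smul_apply, Matrix.cons_val, smul_eq_mul,
        PiLp.single_eq_same, v, η]
      ring
    rw [costJT_compl_singleton_two, costJT, Finset.sum_singleton, h0, h1, h2,
      abs_of_pos (by positivity), abs_of_pos (by positivity), abs_of_pos (by positivity)]
    exact F7_add_F7_le (by positivity) (by positivity)
end
end

section
/- Define F : ℝ → ℝ by F(0) = 0, F(t) = 1/10 if t > 0 and t is rational, and F(t) = 1 if t > 0 and t is irrational; let J(w) = ∑_{i=1}^3 F(|w_i|) on ℝ³. Then for every one-dimensional linear subspace ν of ℝ³ and every d > 0, there exist w ∈ ν with w ≠ 0, η ∈ ℝ³ with ‖η‖ < d‖w‖ (Euclidean norms), and T ⊆ {1,2,3} with |T| ≤ 1, such that J((w+η)_T) ≥ J((w+η)_{T^c}). (Hence for this non-monotone sparseness measure, no one-dimensional null space in ℝ³ satisfies the robust recovery condition at sparsity k = 1.) -/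
/-! Any nonzero `w ∈ ν` can be moved by an arbitrarily small `η` to a point whose first
coordinate is irrational and whose other two are rational, since both sets are dense in `ℝ`.
There `F` costs `1` on `T = {0}` and at most `2 / 10` on its complement. -/

noncomputable section

open scoped Classical in
/-- The non-monotone sparseness measure of Counter-example 2: `F(0) = 0`,
`F(t) = 1/10` for positive rational `t`, and `F(t) = 1` for positive irrational `t`. -/
noncomputable def F9 (t : ℝ) : ℝ :=
  if t = 0 then 0 else if Irrational t then 1 else 1 / 10

lemma irrational_abs_iff {t : ℝ} : Irrational |t| ↔ Irrational t := by
  rcases abs_choice t with h | h <;> simp [h]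

lemma F9_of_irrational {t : ℝ} (ht : Irrational t) : F9 t = 1 := by
  rw [F9, if_neg ht.ne_zero, if_pos ht]

lemma F9_le_of_not_irrational {t : ℝ} (ht : ¬Irrational t) : F9 t ≤ 1 / 10 := by
  rw [F9, if_neg ht]
  split_ifs <;> norm_num

section costJT

variable {n : ℕ} {T : Finset (Fin n)} {x : EuclideanSpace ℝ (Fin n)}

lemma costJT_F9_eq_card (hT : ∀ i ∈ T, Irrational (x i)) : costJT F9 T x = T.card := by
  rw [costJT, Finset.card_eq_sum_ones, Nat.cast_sum]
  exact Finset.sum_congr rfl fun i hi ↦ by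
    rw [F9_of_irrational (irrational_abs_iff.2 (hT i hi)), Nat.cast_one]

lemma costJT_F9_le_card_div (hT : ∀ i ∈ T, ¬Irrational (x i)) :
    costJT F9 T x ≤ T.card / 10 := by
  rw [costJT, div_eq_mul_one_div, ← nsmul_eq_mul]
  exact Finset.sum_le_card_nsmul _ _ _ fun i hi ↦
    F9_le_of_not_irrational (mt irrational_abs_iff.1 (hT i hi))

end costJT

lemma EuclideanSpace.exists_forall_mem_dist_lt {ι : Type*} [Fintype ι] {S : ι → Set ℝ}
    (hS : ∀ i, Dense (S i)) (x : EuclideanSpace ℝ ι) {ε : ℝ} (hε : 0 < ε) :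
    ∃ y : EuclideanSpace ℝ ι, (∀ i, y i ∈ S i) ∧ dist x y < ε := by
  have hdense : Dense (WithLp.ofLp ⁻¹' Set.univ.pi S : Set (EuclideanSpace ℝ ι)) :=
    (dense_pi Set.univ fun i _ ↦ hS i).preimage
      (EuclideanSpace.equiv ι ℝ).toHomeomorph.isOpenMap
  obtain ⟨y, hy, hxy⟩ := hdense.exists_dist_lt x hε
  exact ⟨y, fun i ↦ hy i (Set.mem_univ i), hxy⟩

/-- Counter-example 2, RRC part: for the rational/irrational cost
function `F9`, every one-dimensional subspace `ν` of `ℝ³` fails the robust null space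
condition at sparsity `k = 1` for every parameter `d > 0`: there exist a nonzero
`w ∈ ν`, a perturbation `η` with `‖η‖ < d ‖w‖`, and `T` with `|T| ≤ 1` such that
`J((w+η)_T) ≥ J((w+η)_{T^c})`. -/
theorem stmt9 (ν : Submodule ℝ (EuclideanSpace ℝ (Fin 3)))
    (hν : Module.finrank ℝ ν = 1) (d : ℝ) (hd : 0 < d) :
    ∃ w : EuclideanSpace ℝ (Fin 3), w ∈ ν ∧ w ≠ 0 ∧
      ∃ η : EuclideanSpace ℝ (Fin 3), ‖η‖ < d * ‖w‖ ∧
        ∃ T : Finset (Fin 3), T.card ≤ 1 ∧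
          costJT F9 Tᶜ (w + η) ≤ costJT F9 T (w + η) := by
  obtain ⟨w, hw, hw0⟩ := ν.exists_mem_ne_zero_of_ne_bot fun h ↦ by subst h; simp at hν
  let S : Fin 3 → Set ℝ := fun i ↦ if i = 0 then {t | Irrational t} else Set.range ((↑) : ℚ → ℝ)
  have hS : ∀ i, Dense (S i) := fun i ↦ by
    unfold S; split_ifs
    exacts [dense_irrational, Rat.denseRange_cast]
  obtain ⟨y, hyS, hwy⟩ :=
    EuclideanSpace.exists_forall_mem_dist_lt hS w (mul_pos hd (norm_pos_iff.2 hw0))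
  refine ⟨w, hw, hw0, y - w, by rwa [← dist_eq_norm, dist_comm], {0}, by simp, ?_⟩
  rw [add_sub_cancel]
  have hirr : ∀ i ∈ ({0} : Finset (Fin 3)), Irrational (y i) := by
    intro i hi
    rw [Finset.mem_singleton.1 hi]
    simpa [S] using hyS 0
  have hrat : ∀ i ∈ ({0} : Finset (Fin 3))ᶜ, ¬Irrational (y i) := by
    intro i hi
    have hi0 : i ≠ 0 := by simpa using hi
    obtain ⟨q, hq⟩ : y i ∈ Set.range ((↑) : ℚ → ℝ) := by simpa [S, hi0] using hyS i
    exact hq ▸ Rat.not_irrational q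
  calc costJT F9 {0}ᶜ y ≤ ({0}ᶜ : Finset (Fin 3)).card / 10 := costJT_F9_le_card_div hrat
    _ ≤ ({0} : Finset (Fin 3)).card := by rw [Finset.card_compl]; norm_num
    _ = costJT F9 {0} y := (costJT_F9_eq_card hirr).symm
end
end

section
/- Define F : ℝ → ℝ by F(0) = 0, F(t) = 1/10 if t > 0 and t is rational, and F(t) = 1 if t > 0 and t is irrational; let J(w) = ∑_{i=1}^3 F(|w_i|) on ℝ³. Let w ∈ ℝ³ have all three coordinates nonzero and suppose w_i/w_j is irrational for all i ≠ j. Then the subspace ν = ℝ·w satisfies NSP at sparsity k = 1 for J: for every nonzero t ∈ ℝ and every index i ∈ {1,2,3}, F(|t w_i|) < ∑_{j ≠ i} F(|t w_j|). -/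
noncomputable section

lemma F9_le_one (x : ℝ) : F9 x ≤ 1 := by
  unfold F9; split_ifs <;> norm_num

lemma F9_ge (x : ℝ) (hx : x ≠ 0) : 1 / 10 ≤ F9 x := by
  unfold F9; rw [if_neg hx]; split_ifs <;> norm_num

lemma F9_eq_one_of_irr {x : ℝ} (h : Irrational x) : F9 x = 1 := by
  unfold F9; rw [if_neg h.ne_zero, if_pos h]

/-- One of the two terms must be irrational (hence F9 = 1). -/
lemma one_irr {x y : ℝ} (hx : x ≠ 0) (hy : y ≠ 0) (h : Irrational (x / y)) :
    Irrational |x| ∨ Irrational |y| := by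
  by_contra hc
  push_neg at hc
  obtain ⟨h1, h2⟩ := hc
  rw [Irrational, not_not] at h1 h2
  obtain ⟨q, hq⟩ := h1
  -- hq : (q:ℝ) = |x|
  obtain ⟨r, hr⟩ := h2
  apply h
  have habs : |x / y| = (q / r : ℚ) := by
    rw [abs_div, ← hq, ← hr]; push_cast; ring
  rcases abs_cases (x / y) with ⟨he, _⟩ | ⟨he, _⟩
  · exact ⟨(q / r : ℚ), by rw [← he, habs]⟩
  · refine ⟨(-(q / r) : ℚ), ?_⟩
    push_cast
    have : (↑(q / r) : ℝ) = -(x / y) := by rw [← habs, he]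
    push_cast at this
    linarith

/-- Counter-example 2, ERC part for type `(1,2,3)` null spaces:
if all three coordinates of `w` are nonzero and pairwise ratios `w i / w j` (for `i ≠ j`)
are irrational, then the line `ℝ·w` satisfies NSP at sparsity `k = 1` for the cost `J`
built from `F9`: for every nonzero `t` and every index `i`,
`F(|t w i|) < ∑_{j ≠ i} F(|t w j|)`. -/
theorem stmt10 (w : Fin 3 → ℝ) (hw : ∀ i, w i ≠ 0)
    (hirr : ∀ i j, i ≠ j → Irrational (w i / w j)) :
    ∀ t : ℝ, t ≠ 0 → ∀ i : Fin 3,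
      F9 |t * w i| < ∑ j ∈ ({i}ᶜ : Finset (Fin 3)), F9 |t * w j| := by
  intro t ht i
  have key : ∀ j k : Fin 3, j ≠ k →
      F9 |t * w i| < F9 |t * w j| + F9 |t * w k| := by
    intro j k hjk
    have hj : t * w j ≠ 0 := mul_ne_zero ht (hw j)
    have hk : t * w k ≠ 0 := mul_ne_zero ht (hw k)
    have hq : (t * w j) / (t * w k) = w j / w k := by
      exact mul_div_mul_left (w j) (w k) ht
    have hirr' : Irrational ((t * w j) / (t * w k)) := by
      rw [hq]; exact hirr j k hjk
    have h1 := F9_le_one |t * w i|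
    rcases one_irr hj hk hirr' with h | h
    · have := F9_eq_one_of_irr h
      have := F9_ge |t * w k| (abs_ne_zero.mpr hk)
      linarith
    · have := F9_eq_one_of_irr h
      have := F9_ge |t * w j| (abs_ne_zero.mpr hj)
      linarith
  obtain ⟨j, k, hjk, hset⟩ : ∃ j k : Fin 3, j ≠ k ∧ ({i}ᶜ : Finset (Fin 3)) = {j, k} := by
    fin_cases i
    · exact ⟨1, 2, by decide, by decide⟩
    · exact ⟨0, 2, by decide, by decide⟩
    · exact ⟨0, 1, by decide, by decide⟩
  rw [hset, Finset.sum_insert (Finset.notMem_singleton.mpr hjk), Finset.sum_singleton]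
  exact key j k hjk
end
end

section
/- Let E ⊆ ℝ² be upward closed with respect to the componentwise order, i.e., if (a, b) ∈ E, a ≤ a', and b ≤ b', then (a', b') ∈ E. Then the topological frontier of E (the closure of E minus the interior of E) has two-dimensional Lebesgue measure zero. -/
open MeasureTheory Set

/-- key step in the proof of Theorem 4, low-dimensional case:
if `E ⊆ ℝ²` is upward closed for the componentwise order, then its topological
frontier (closure minus interior) has two-dimensional Lebesgue measure zero. -/
theorem stmt11 (E : Set (ℝ × ℝ))
    (hE : ∀ a b a' b' : ℝ, (a, b) ∈ E → a ≤ a' → b ≤ b' → (a', b') ∈ E) :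
    MeasureTheory.volume (frontier E) = 0 := by
  classical
  -- strict shift: points strictly above a closure point are in E
  have hC : ∀ a b a' b' : ℝ, (a, b) ∈ closure E → a < a' → b < b' → (a', b') ∈ E := by
    intro a b a' b' hab ha hb
    have hopen : IsOpen (Iio a' ×ˢ Iio b') := isOpen_Iio.prod isOpen_Iio
    rcases mem_closure_iff.1 hab _ hopen ⟨ha, hb⟩ with ⟨⟨p, q⟩, ⟨hp, hq⟩, hpq⟩
    exact hE p q a' b' hpq hp.le hq.le
  -- the closure is upward closed
  have hM : ∀ a b a' b' : ℝ, (a, b) ∈ closure E → a ≤ a' → b ≤ b' →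
      (a', b') ∈ closure E := by
    intro a b a' b' hab ha hb
    have hT : Continuous fun p : ℝ × ℝ => (p.1 + (a' - a), p.2 + (b' - b)) :=
      ((continuous_fst.add continuous_const).prodMk (continuous_snd.add continuous_const))
    have himg : (fun p : ℝ × ℝ => (p.1 + (a' - a), p.2 + (b' - b))) '' E ⊆ E := by
      rintro _ ⟨⟨p, q⟩, hpq, rfl⟩
      exact hE p q _ _ hpq (by linarith) (by linarith)
    have := (image_closure_subset_closure_image hT).trans (closure_mono himg)
    have h2 : ((a : ℝ) + (a' - a), b + (b' - b)) ∈ closure E :=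
      this ⟨(a, b), hab, rfl⟩
    simpa using h2
  set g : ℝ → EReal := fun a => sInf ((fun b : ℝ => (b : EReal)) '' {b | (a, b) ∈ closure E})
    with hgdef
  have hganti : Antitone g := by
    intro a a' h
    apply sInf_le_sInf
    rintro _ ⟨b, hb, rfl⟩
    exact ⟨b, hM a b a' b hb h le_rfl, rfl⟩
  set h : ℝ → EReal := fun a => ⨅ (a' : ℝ) (_ : a' < a), g a' with hhdef
  have hgh : ∀ a, g a ≤ h a := fun a => le_iInf₂ fun a' h' => hganti h'.le
  have hmono2 : ∀ a₁ a₂ : ℝ, a₁ < a₂ → h a₂ ≤ g a₁ := fun a₁ a₂ hlt =>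
    iInf_le_of_le a₁ (iInf_le _ hlt)
  set N : Set ℝ := {a | g a < h a} with hNdef
  -- N is countable
  have hNcount : N.Countable := by
    have : N ⊆ ⋃ q : ℚ, {a : ℝ | g a < ((q : ℝ) : EReal) ∧ ((q : ℝ) : EReal) < h a} := by
      intro a ha
      rcases EReal.exists_rat_btwn_of_lt ha with ⟨q, hq1, hq2⟩
      exact mem_iUnion.2 ⟨q, hq1, hq2⟩
    refine Set.Countable.mono this (Set.countable_iUnion fun q => ?_)
    apply Set.Subsingleton.countable
    intro a₁ h₁ a₂ h₂
    by_contra hne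
    rcases lt_or_gt_of_ne hne with hlt | hlt
    · exact absurd ((h₂.2.trans_le (hmono2 a₁ a₂ hlt)).trans h₁.1) (lt_irrefl _)
    · exact absurd ((h₁.2.trans_le (hmono2 a₂ a₁ hlt)).trans h₂.1) (lt_irrefl _)
  -- main inclusion
  have hincl : frontier E ⊆ (N ×ˢ (univ : Set ℝ)) ∪ {p : ℝ × ℝ | (p.2 : EReal) = g p.1} := by
    rintro ⟨a, b⟩ hfr
    have h1 : (a, b) ∈ closure E := frontier_subset_closure hfr
    have h2 : (a, b) ∉ interior E := hfr.2
    have hga : g a ≤ (b : EReal) := sInf_le ⟨b, h1, rfl⟩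
    have hbh : (b : EReal) ≤ h a := by
      refine le_iInf₂ fun a' ha' => ?_
      by_contra hcon
      push_neg at hcon
      rcases sInf_lt_iff.1 hcon with ⟨_, ⟨c, hc, rfl⟩, hcb⟩
      have hcb' : c < b := EReal.coe_lt_coe_iff.1 hcb
      have : (a, b) ∈ interior E := by
        rw [mem_interior]
        refine ⟨Ioi a' ×ˢ Ioi c, ?_, isOpen_Ioi.prod isOpen_Ioi, ⟨ha', hcb'⟩⟩
        rintro ⟨x, y⟩ ⟨hx, hy⟩
        exact hC a' c x y hc hx hy
      exact h2 this
    by_cases haN : a ∈ N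
    · exact Or.inl ⟨haN, mem_univ b⟩
    · have heq : h a = g a := le_antisymm (not_lt.1 haN) (hgh a)
      exact Or.inr (le_antisymm (heq ▸ hbh) hga)
  -- measure of the two pieces
  have hG : MeasureTheory.volume {p : ℝ × ℝ | (p.2 : EReal) = g p.1} = 0 := by
    have hgmeas : Measurable g := hganti.measurable
    have hf1 : Measurable fun p : ℝ × ℝ => ((p.2 : ℝ) : EReal) :=
      continuous_coe_real_ereal.measurable.comp measurable_snd
    have hf2 : Measurable fun p : ℝ × ℝ => g p.1 := hgmeas.comp measurable_fst
    have hmeas : MeasurableSet {p : ℝ × ℝ | (p.2 : EReal) = g p.1} := by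
      have := (measurableSet_le hf1 hf2).inter (measurableSet_le hf2 hf1)
      convert this using 1
      ext p
      simp [le_antisymm_iff]
    rw [MeasureTheory.Measure.volume_eq_prod ℝ ℝ,
      MeasureTheory.Measure.measure_prod_null hmeas]
    refine Filter.Eventually.of_forall fun x => ?_
    have hsub : (Prod.mk x ⁻¹' {p : ℝ × ℝ | (p.2 : EReal) = g p.1}).Subsingleton := by
      intro b₁ hb₁ b₂ hb₂
      have : (b₁ : EReal) = (b₂ : EReal) := by
        simp only [mem_preimage, mem_setOf_eq] at hb₁ hb₂
        rw [hb₁, hb₂]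
      exact_mod_cast this
    exact hsub.measure_zero _
  have hNset : MeasureTheory.volume (N ×ˢ (univ : Set ℝ)) = 0 := by
    rw [MeasureTheory.Measure.volume_eq_prod ℝ ℝ, MeasureTheory.Measure.prod_prod,
      hNcount.measure_zero, zero_mul]
  refine measure_mono_null hincl ?_
  exact measure_union_null hNset hG
end

section
/- Let ν be an l-dimensional linear subspace of ℝⁿ, let d > 0, let z ∈ ν with z ≠ 0, and let η ∈ ℝⁿ with ‖η‖ < d‖z‖ (Euclidean norms). Then there exists an l-dimensional linear subspace ν' of ℝⁿ such that z + η ∈ ν' and ‖P_ν − P_{ν'}‖ < d. -/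
/-
Write `x = z + η = w + b` with `w = P_ν x ∈ ν` and `b ⊥ ν`. Rotating `ν` in the plane spanned
by a unit vector `u ∈ ν` along `w` and the unit vector along `b`, by the angle `θ` that carries
`u` to `x / ‖x‖`, gives a subspace `ν'` of the same dimension through `x`. The rotation fixes
`ν ⊓ u^⊥`, so `P_ν - P_ν'` is the difference of the projections onto two lines at angle `θ`,
whose norm is `sin θ = ‖b‖ / ‖x‖`. Finally `‖b‖ / ‖x‖ ≤ ‖η‖ / ‖z‖ < d`: the sine of the angle
between `x` and `ν` is at most that between `x` and `z ∈ ν`.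
-/

noncomputable section

/-- The orthogonal projection onto `ν`, as a continuous linear map `ℝⁿ → ℝⁿ`. -/
def projCLM {n : ℕ} (ν : Submodule ℝ (EuclideanSpace ℝ (Fin n))) :
    EuclideanSpace ℝ (Fin n) →L[ℝ] EuclideanSpace ℝ (Fin n) :=
  ν.subtypeL.comp (ν.orthogonalProjectionOnto)

open Submodule RealInnerProductSpace

namespace Submodule

variable {𝕜 E : Type*} [RCLike 𝕜] [NormedAddCommGroup E] [InnerProductSpace 𝕜 E]

theorem finrank_sup_of_isOrtho {U V : Submodule 𝕜 E} [FiniteDimensional 𝕜 U]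
    [FiniteDimensional 𝕜 V] (h : U ⟂ V) :
    Module.finrank 𝕜 ↥(U ⊔ V) = Module.finrank 𝕜 U + Module.finrank 𝕜 V := by
  rw [← finrank_sup_add_finrank_inf_eq U V, h.disjoint.eq_bot, finrank_bot, add_zero]

theorem starProjection_sup_of_isOrtho {U V : Submodule 𝕜 E} [U.HasOrthogonalProjection]
    [V.HasOrthogonalProjection] [(U ⊔ V).HasOrthogonalProjection] (h : U ⟂ V) :
    (U ⊔ V).starProjection = U.starProjection + V.starProjection := by
  ext x : 1
  rw [add_apply]
  refine eq_starProjection_of_mem_orthogonal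
    (add_mem (mem_sup_left (starProjection_apply_mem U x))
      (mem_sup_right (starProjection_apply_mem V x))) ?_
  rw [← inf_orthogonal, mem_inf, sub_add_eq_sub_sub]
  nth_rw 2 [sub_right_comm]
  exact ⟨sub_mem (sub_starProjection_mem_orthogonal x) (h.symm.le (starProjection_apply_mem V x)),
    sub_mem (sub_starProjection_mem_orthogonal x) (h.le (starProjection_apply_mem U x))⟩

end Submodule

variable {E : Type*} [NormedAddCommGroup E] [InnerProductSpace ℝ E]

theorem inner_sq_add_inner_sq_le_norm_sq {u v : E} (hu : ‖u‖ = 1) (hv : ‖v‖ = 1)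
    (huv : ⟪u, v⟫ = 0) (y : E) : ⟪u, y⟫ ^ 2 + ⟪v, y⟫ ^ 2 ≤ ‖y‖ ^ 2 := by
  have huu : ⟪u, u⟫ = 1 := by rw [real_inner_self_eq_norm_sq, hu, one_pow]
  have hvv : ⟪v, v⟫ = 1 := by rw [real_inner_self_eq_norm_sq, hv, one_pow]
  have h := real_inner_self_nonneg (x := y - ⟪u, y⟫ • u - ⟪v, y⟫ • v)
  simp only [inner_sub_left, inner_sub_right, real_inner_smul_left, real_inner_smul_right,
    huu, hvv, huv, real_inner_comm u v, real_inner_comm u y, real_inner_comm v y] at h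
  rw [real_inner_self_eq_norm_sq] at h
  linarith

theorem norm_smul_add_smul_eq_one {u v : E} (hu : ‖u‖ = 1) (hv : ‖v‖ = 1) (huv : ⟪u, v⟫ = 0)
    {c s : ℝ} (hcs : c ^ 2 + s ^ 2 = 1) : ‖c • u + s • v‖ = 1 := by
  rw [← pow_eq_one_iff_of_nonneg (norm_nonneg _) two_ne_zero, @norm_add_sq_real,
    real_inner_smul_left, real_inner_smul_right, huv, norm_smul, norm_smul, hu, hv]
  simp only [Real.norm_eq_abs, mul_pow, sq_abs]
  linear_combination hcs

theorem norm_starProjection_span_sub_le {u v : E} (hu : ‖u‖ = 1) (hv : ‖v‖ = 1)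
    (huv : ⟪u, v⟫ = 0) {c s : ℝ} (hcs : c ^ 2 + s ^ 2 = 1) :
    ‖(ℝ ∙ u).starProjection - (ℝ ∙ (c • u + s • v)).starProjection‖ ≤ |s| := by
  have huu : ⟪u, u⟫ = 1 := by rw [real_inner_self_eq_norm_sq, hu, one_pow]
  have hvv : ⟪v, v⟫ = 1 := by rw [real_inner_self_eq_norm_sq, hv, one_pow]
  have hu' := norm_smul_add_smul_eq_one hu hv huv hcs
  refine ContinuousLinearMap.opNorm_le_bound _ (abs_nonneg s) fun y ↦ ?_
  rw [sub_apply, starProjection_unit_singleton ℝ hu, starProjection_unit_singleton ℝ hu']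
  have hsq : ‖⟪u, y⟫ • u - ⟪c • u + s • v, y⟫ • (c • u + s • v)‖ ^ 2
      = s ^ 2 * (⟪u, y⟫ ^ 2 + ⟪v, y⟫ ^ 2) := by
    rw [← real_inner_self_eq_norm_sq]
    simp only [inner_sub_left, inner_sub_right, inner_add_left, inner_add_right,
      real_inner_smul_left, real_inner_smul_right, huu, hvv, huv, real_inner_comm u v]
    linear_combination ((c * ⟪u, y⟫ + s * ⟪v, y⟫) ^ 2 - ⟪u, y⟫ ^ 2) * hcs
  refine le_of_sq_le_sq ?_ (by positivity)
  rw [hsq, mul_pow, sq_abs]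
  exact mul_le_mul_of_nonneg_left (inner_sq_add_inner_sq_le_norm_sq hu hv huv y) (sq_nonneg s)

theorem exists_finrank_eq_smul_add_smul_mem_norm_starProjection_sub_le [FiniteDimensional ℝ E]
    (ν : Submodule ℝ E) {u v : E} (hu : u ∈ ν) (hv : v ∈ νᗮ) (hu1 : ‖u‖ = 1)
    (hv1 : ‖v‖ = 1) {c s : ℝ} (hcs : c ^ 2 + s ^ 2 = 1) :
    ∃ ν' : Submodule ℝ E, Module.finrank ℝ ν' = Module.finrank ℝ ν ∧
      c • u + s • v ∈ ν' ∧ ‖ν.starProjection - ν'.starProjection‖ ≤ |s| := by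
  set ν₀ := (ℝ ∙ u)ᗮ ⊓ ν
  have hν : ℝ ∙ u ⊔ ν₀ = ν :=
    sup_orthogonal_inf_of_hasOrthogonalProjection ((span_singleton_le_iff_mem _ _).2 hu)
  have hν₀u : ℝ ∙ u ⟂ ν₀ := (isOrtho_orthogonal_right _).mono_right inf_le_left
  have hν₀u' : ℝ ∙ (c • u + s • v) ⟂ ν₀ := (span_singleton_le_iff_mem _ _).2 <|
    add_mem (smul_mem _ _ (hν₀u.le (mem_span_singleton_self u)))
      (smul_mem _ _ (orthogonal_le inf_le_right hv))
  have huv : ⟪u, v⟫ = 0 := inner_right_of_mem_orthogonal hu hv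
  have hu' := norm_smul_add_smul_eq_one hu1 hv1 huv hcs
  refine ⟨ℝ ∙ (c • u + s • v) ⊔ ν₀, ?_, mem_sup_left (mem_span_singleton_self _), ?_⟩
  · conv_rhs => rw [← hν]
    rw [finrank_sup_of_isOrtho hν₀u, finrank_sup_of_isOrtho hν₀u',
      finrank_span_singleton (v := c • u + s • v) (by simp [← norm_ne_zero_iff, hu']),
      finrank_span_singleton (v := u) (by simp [← norm_ne_zero_iff, hu1])]
  · clear_value ν₀
    subst hν
    rw [starProjection_sup_of_isOrtho hν₀u, starProjection_sup_of_isOrtho hν₀u',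
      add_sub_add_right_eq_sub]
    exact norm_starProjection_span_sub_le hu1 hv1 huv hcs

theorem norm_sub_starProjection_mul_norm_le (K : Submodule ℝ E) [K.HasOrthogonalProjection]
    {z : E} (hz : z ∈ K) (x : E) :
    ‖x - K.starProjection x‖ * ‖z‖ ≤ ‖x - z‖ * ‖x‖ := by
  have ha : K.starProjection x ∈ K := starProjection_apply_mem K x
  have hb : x - K.starProjection x ∈ Kᗮ := sub_starProjection_mem_orthogonal x
  have hsplit : K.starProjection x + (x - K.starProjection x) = x := add_sub_cancel _ x
  generalize K.starProjection x = a at ha hb hsplit ⊢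
  generalize x - a = b at hb hsplit ⊢
  subst hsplit
  have hx : ‖a + b‖ ^ 2 = ‖a‖ ^ 2 + ‖b‖ ^ 2 := by
    simpa only [sq] using norm_add_sq_eq_norm_sq_add_norm_sq_real
      (inner_right_of_mem_orthogonal ha hb)
  have hxz : ‖a + b - z‖ ^ 2 = ‖a - z‖ ^ 2 + ‖b‖ ^ 2 := by
    rw [add_sub_right_comm]
    simpa only [sq] using norm_add_sq_eq_norm_sq_add_norm_sq_real
      (inner_right_of_mem_orthogonal (sub_mem ha hz) hb)
  have hz : ‖z‖ ≤ ‖a‖ + ‖a - z‖ := by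
    simpa only [sub_sub_cancel] using norm_sub_le a (a - z)
  -- with `p = ‖a - z‖`, `q = ‖a‖`, `t = ‖b‖` this is `t²(p + q)² ≤ (p² + t²)(q² + t²)`,
  -- i.e. `2pqt² ≤ p²q² + t⁴`
  refine le_of_sq_le_sq ?_ (by positivity)
  rw [mul_pow, mul_pow, hx, hxz]
  have hz2 : ‖z‖ ^ 2 ≤ (‖a‖ + ‖a - z‖) ^ 2 := pow_le_pow_left₀ (norm_nonneg z) hz 2
  nlinarith [sq_nonneg (‖a‖ * ‖a - z‖ - ‖b‖ ^ 2), sq_nonneg ‖b‖]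

theorem norm_sub_starProjection_div_norm_le (K : Submodule ℝ E) [K.HasOrthogonalProjection]
    {z : E} (hz : z ∈ K) (hz0 : z ≠ 0) (x : E) :
    ‖x - K.starProjection x‖ / ‖x‖ ≤ ‖x - z‖ / ‖z‖ := by
  rcases eq_or_ne x 0 with rfl | hx
  · simp only [norm_zero, div_zero]
    positivity
  rw [div_le_div_iff₀ (norm_pos_iff.2 hx) (norm_pos_iff.2 hz0)]
  exact norm_sub_starProjection_mul_norm_le K hz x

theorem exists_norm_eq_one_mem_span_singleton {ν : Submodule ℝ E} (hν : ν ≠ ⊥) {w : E}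
    (hw : w ∈ ν) : ∃ u ∈ ν, ‖u‖ = 1 ∧ w ∈ ℝ ∙ u := by
  obtain ⟨y, hyν, hy0, hwy⟩ : ∃ y ∈ ν, y ≠ 0 ∧ w ∈ ℝ ∙ y := by
    by_cases hw0 : w = 0
    · obtain ⟨y, hy, hy0⟩ := (Submodule.ne_bot_iff ν).1 hν
      exact ⟨y, hy, hy0, hw0 ▸ zero_mem _⟩
    · exact ⟨w, hw, hw0, mem_span_singleton_self w⟩
  refine ⟨‖y‖⁻¹ • y, smul_mem _ _ hyν, norm_smul_inv_norm hy0, ?_⟩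
  rwa [span_singleton_smul_eq (by simpa using hy0 : IsUnit ‖y‖⁻¹)]

theorem exists_finrank_eq_mem_norm_starProjection_sub_le [FiniteDimensional ℝ E]
    {ν : Submodule ℝ E} (hν : ν ≠ ⊥) (x : E) :
    ∃ ν' : Submodule ℝ E, Module.finrank ℝ ν' = Module.finrank ℝ ν ∧ x ∈ ν' ∧
      ‖ν.starProjection - ν'.starProjection‖ ≤ ‖x - ν.starProjection x‖ / ‖x‖ := by
  set b := x - ν.starProjection x with hb_def
  rcases eq_or_ne b 0 with hb0 | hb0
  · refine ⟨ν, rfl, ?_, by simp only [sub_self, norm_zero]; positivity⟩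
    rw [sub_eq_zero.1 hb0]
    exact starProjection_apply_mem ν x
  obtain ⟨u, huν, hu1, hxu⟩ := exists_norm_eq_one_mem_span_singleton hν
    (starProjection_apply_mem ν x)
  obtain ⟨α, hα⟩ := mem_span_singleton.1 hxu
  have hx : x = α • u + b := by rw [hα, hb_def, add_sub_cancel]
  have hx_pos : 0 < ‖x‖ := norm_pos_iff.2 fun h ↦ hb0 (by simp [hb_def, h])
  have hb_pos : 0 < ‖b‖ := norm_pos_iff.2 hb0
  have hpyth : ‖x‖ ^ 2 = α ^ 2 + ‖b‖ ^ 2 := by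
    rw [norm_sq_eq_add_norm_sq_starProjection x ν, starProjection_orthogonal_val, ← hb_def, ← hα,
      norm_smul, hu1, mul_one, Real.norm_eq_abs, sq_abs]
  obtain ⟨ν', hrank, hmem, hnorm⟩ := exists_finrank_eq_smul_add_smul_mem_norm_starProjection_sub_le
    ν huν (smul_mem _ ‖b‖⁻¹ (sub_starProjection_mem_orthogonal x)) hu1 (norm_smul_inv_norm hb0)
    (c := α / ‖x‖) (s := ‖b‖ / ‖x‖) (by field_simp; linarith)
  refine ⟨ν', hrank, ?_, hnorm.trans_eq (abs_of_nonneg (by positivity))⟩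
  have hrot : (α / ‖x‖) • u + (‖b‖ / ‖x‖) • (‖b‖⁻¹ • b) = ‖x‖⁻¹ • x := by
    rw [hx, smul_smul]
    match_scalars <;> field_simp
  rwa [hrot, smul_mem_iff _ (inv_ne_zero hx_pos.ne')] at hmem

theorem stmt12_general {n l : ℕ} (ν : Submodule ℝ (EuclideanSpace ℝ (Fin n)))
    (hν : Module.finrank ℝ ν = l) (d : ℝ)
    (z : EuclideanSpace ℝ (Fin n)) (hz : z ∈ ν) (hz0 : z ≠ 0)
    (η : EuclideanSpace ℝ (Fin n)) (hη : ‖η‖ < d * ‖z‖) :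
    ∃ ν' : Submodule ℝ (EuclideanSpace ℝ (Fin n)),
      Module.finrank ℝ ν' = l ∧ z + η ∈ ν' ∧ ‖projCLM ν - projCLM ν'‖ < d := by
  obtain ⟨ν', hrank, hmem, hnorm⟩ := exists_finrank_eq_mem_norm_starProjection_sub_le
    ((Submodule.ne_bot_iff ν).2 ⟨z, hz, hz0⟩) (z + η)
  refine ⟨ν', hrank.trans hν, hmem, hnorm.trans_lt ?_⟩
  calc ‖z + η - ν.starProjection (z + η)‖ / ‖z + η‖ ≤ ‖z + η - z‖ / ‖z‖ :=
        norm_sub_starProjection_div_norm_le ν hz hz0 (z + η)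
    _ < d := by rwa [add_sub_cancel_left, div_lt_iff₀ (norm_pos_iff.2 hz0)]

/-- Lemma 8: if `ν` is an `l`-dimensional subspace of `ℝⁿ`,
`z ∈ ν` is nonzero and `‖η‖ < d ‖z‖`, then there is an `l`-dimensional subspace `ν'`
containing `z + η` with `‖P_ν − P_{ν'}‖ < d`. -/
theorem stmt12 {n l : ℕ} (ν : Submodule ℝ (EuclideanSpace ℝ (Fin n)))
    (hν : Module.finrank ℝ ν = l) (d : ℝ) (hd : 0 < d)
    (z : EuclideanSpace ℝ (Fin n)) (hz : z ∈ ν) (hz0 : z ≠ 0)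
    (η : EuclideanSpace ℝ (Fin n)) (hη : ‖η‖ < d * ‖z‖) :
    ∃ ν' : Submodule ℝ (EuclideanSpace ℝ (Fin n)),
      Module.finrank ℝ ν' = l ∧ z + η ∈ ν' ∧ ‖projCLM ν - projCLM ν'‖ < d :=
  stmt12_general ν hν d z hz hz0 η hη
end
end

section
/- Let F be a sparseness measure with cost function J on ℝⁿ, let k ≥ 1, and let d > 0. Define D := {z ∈ ℝⁿ : z ≠ 0 and there exists T ⊆ {1,…,n} with |T| ≤ k and J(z_T) ≥ J(z_{T^c})}, D_d := {z ∈ ℝⁿ : z ≠ 0 and there exists η ∈ ℝⁿ with ‖η‖ < d‖z‖ and z + η ∈ D}, the cones C := {x ∈ ℝⁿ : ∃ t ∈ ℝ, t x ∈ D} and C_d := {x ∈ ℝⁿ : ∃ t ∈ ℝ, t x ∈ D_d}, and the spherical sections K := C ∩ S^{n−1} and K_d := C_d ∩ S^{n−1}, where S^{n−1} is the Euclidean unit sphere of ℝⁿ. Then for every g ∈ ℝⁿ, sup_{x ∈ K_d} ⟨g, x⟩ ≤ d‖g‖ + sup_{x ∈ K} ⟨g, x⟩ (suprema taken as real suprema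 of the corresponding sets of inner products, with the convention sup ∅ = 0). -/
/-!
A point `x ∈ K_d` lies within distance `d` of some `v ∈ C`. Pulling `v` back along its ray into
the closed unit ball does not increase its distance to `x` and gives `p ∈ C` with `‖p‖ ≤ 1`, so
`⟨g, p⟩ ≤ ‖p‖ · sup_K ⟨g, ·⟩ ≤ sup_K ⟨g, ·⟩`, the supremum being nonnegative because `K = -K`.
Then `⟨g, x⟩ ≤ ⟨g, p⟩ + ‖g‖ ‖x - p‖ ≤ sup_K ⟨g, ·⟩ + d ‖g‖`.
-/

noncomputable section

/-- The set `D` of nonzero vectors violating the null space inequality for some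
support `T` with `|T| ≤ k`. -/
def setD {n : ℕ} (F : ℝ → ℝ) (k : ℕ) : Set (EuclideanSpace ℝ (Fin n)) :=
  {z | z ≠ 0 ∧ ∃ T : Finset (Fin n), T.card ≤ k ∧ costJT F Tᶜ z ≤ costJT F T z}

/-- The set `D_d` of nonzero vectors within relative distance `d` of `D`. -/
def setDd {n : ℕ} (F : ℝ → ℝ) (k : ℕ) (d : ℝ) : Set (EuclideanSpace ℝ (Fin n)) :=
  {z | z ≠ 0 ∧ ∃ η : EuclideanSpace ℝ (Fin n), ‖η‖ < d * ‖z‖ ∧ z + η ∈ setD F k}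

/-- The cone generated by `D`. -/
def coneC {n : ℕ} (F : ℝ → ℝ) (k : ℕ) : Set (EuclideanSpace ℝ (Fin n)) :=
  {x | ∃ t : ℝ, t • x ∈ setD F k}

/-- The cone generated by `D_d`. -/
def coneCd {n : ℕ} (F : ℝ → ℝ) (k : ℕ) (d : ℝ) : Set (EuclideanSpace ℝ (Fin n)) :=
  {x | ∃ t : ℝ, t • x ∈ setDd F k d}

/-- The spherical section `K = C ∩ S^{n−1}`. -/
def sphK {n : ℕ} (F : ℝ → ℝ) (k : ℕ) : Set (EuclideanSpace ℝ (Fin n)) :=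
  coneC F k ∩ Metric.sphere (0 : EuclideanSpace ℝ (Fin n)) 1

/-- The spherical section `K_d = C_d ∩ S^{n−1}`. -/
def sphKd {n : ℕ} (F : ℝ → ℝ) (k : ℕ) (d : ℝ) : Set (EuclideanSpace ℝ (Fin n)) :=
  coneCd F k d ∩ Metric.sphere (0 : EuclideanSpace ℝ (Fin n)) 1

section InnerProductSpace

variable {E : Type*} [NormedAddCommGroup E] [InnerProductSpace ℝ E]

lemma norm_sub_inv_norm_smul_le {x v : E} (hx : ‖x‖ ≤ 1) (hv : 1 ≤ ‖v‖) :
    ‖x - ‖v‖⁻¹ • v‖ ≤ ‖x - v‖ := by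
  have hr : 0 < ‖v‖ := one_pos.trans_le hv
  have hunit : ‖‖v‖⁻¹ • v‖ = 1 := by
    rw [norm_smul, Real.norm_of_nonneg (inv_nonneg.mpr hr.le), inv_mul_cancel₀ hr.ne']
  obtain ⟨a, ha, hxv⟩ : ∃ a ≤ 1, inner ℝ x v = ‖v‖ * a := by
    refine ⟨‖v‖⁻¹ * inner ℝ x v, ?_, (mul_inv_cancel_left₀ hr.ne' _).symm⟩
    rw [inv_mul_le_iff₀ hr, mul_one]
    exact (real_inner_le_norm x v).trans (mul_le_of_le_one_left hr.le hx)
  -- with `r = ‖v‖`: `‖x - v‖² - ‖x - v / r‖² = (r - 1) (r + 1 - 2 a)`, where `⟪x, v⟫ = r a`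
  have hsq : ‖x - ‖v‖⁻¹ • v‖ ^ 2 ≤ ‖x - v‖ ^ 2 := by
    rw [norm_sub_sq_real, norm_sub_sq_real, hunit, real_inner_smul_right, hxv,
      inv_mul_cancel_left₀ hr.ne']
    nlinarith [mul_nonneg (sub_nonneg.mpr hv) (by linarith : (0 : ℝ) ≤ ‖v‖ + 1 - 2 * a)]
  exact le_of_pow_le_pow_left₀ two_ne_zero (norm_nonneg _) hsq

lemma exists_pos_smul_norm_le_one_norm_sub_le {x v : E} (hx : ‖x‖ ≤ 1) (hv : v ≠ 0) :
    ∃ s : ℝ, 0 < s ∧ ‖s • v‖ ≤ 1 ∧ ‖x - s • v‖ ≤ ‖x - v‖ := by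
  rcases le_or_gt ‖v‖ 1 with hv1 | hv1
  · exact ⟨1, one_pos, by rwa [one_smul], by rw [one_smul]⟩
  · have hpos : 0 < ‖v‖ := norm_pos_iff.mpr hv
    refine ⟨‖v‖⁻¹, inv_pos.mpr hpos, ?_, norm_sub_inv_norm_smul_le hx hv1.le⟩
    rw [norm_smul, Real.norm_of_nonneg (inv_nonneg.mpr hpos.le), inv_mul_cancel₀ hpos.ne']

lemma bddAbove_image_inner_of_subset_closedBall (g : E) {s : Set E} {r : ℝ}
    (hs : s ⊆ Metric.closedBall 0 r) : BddAbove ((fun x => inner ℝ g x) '' s) := by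
  refine ⟨‖g‖ * r, ?_⟩
  rintro _ ⟨x, hx, rfl⟩
  have hxr : ‖x‖ ≤ r := mem_closedBall_zero_iff.mp (hs hx)
  exact (real_inner_le_norm g x).trans (mul_le_mul_of_nonneg_left hxr (norm_nonneg g))

lemma sSup_image_inner_nonneg_of_neg_mem (g : E) {s : Set E} (hneg : ∀ x ∈ s, -x ∈ s)
    (hs : BddAbove ((fun x => inner ℝ g x) '' s)) : 0 ≤ sSup ((fun x => inner ℝ g x) '' s) := by
  rcases s.eq_empty_or_nonempty with rfl | ⟨x, hx⟩
  · simp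
  · have h₁ := le_csSup hs ⟨x, hx, rfl⟩
    have h₂ := le_csSup hs ⟨-x, hneg x hx, rfl⟩
    simp only [inner_neg_right] at h₂
    linarith

end InnerProductSpace

section Cones

variable {n : ℕ} {F : ℝ → ℝ} {k : ℕ}

lemma ne_zero_of_mem_coneC {x : EuclideanSpace ℝ (Fin n)} (hx : x ∈ coneC F k) : x ≠ 0 := by
  rintro rfl
  obtain ⟨t, ht⟩ := hx
  exact ht.1 (smul_zero t)

lemma smul_mem_coneC {x : EuclideanSpace ℝ (Fin n)} (hx : x ∈ coneC F k) {c : ℝ} (hc : c ≠ 0) :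
    c • x ∈ coneC F k := by
  obtain ⟨t, ht⟩ := hx
  exact ⟨t / c, by rwa [smul_smul, div_mul_cancel₀ t hc]⟩

lemma inv_norm_smul_mem_sphK {x : EuclideanSpace ℝ (Fin n)} (hx : x ∈ coneC F k) :
    ‖x‖⁻¹ • x ∈ sphK F k := by
  have hpos : 0 < ‖x‖ := norm_pos_iff.mpr (ne_zero_of_mem_coneC hx)
  refine ⟨smul_mem_coneC hx (inv_ne_zero hpos.ne'), ?_⟩
  rw [mem_sphere_zero_iff_norm, norm_smul, Real.norm_of_nonneg (inv_nonneg.mpr hpos.le),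
    inv_mul_cancel₀ hpos.ne']

lemma neg_mem_sphK {x : EuclideanSpace ℝ (Fin n)} (hx : x ∈ sphK F k) : -x ∈ sphK F k := by
  refine ⟨?_, by simpa using hx.2⟩
  simpa using smul_mem_coneC hx.1 (neg_ne_zero.mpr one_ne_zero)

lemma exists_mem_coneC_norm_sub_lt {d : ℝ} {x : EuclideanSpace ℝ (Fin n)}
    (hx : x ∈ coneCd F k d) : ∃ v ∈ coneC F k, ‖x - v‖ < d * ‖x‖ := by
  obtain ⟨t, htx, η, hη, hmem⟩ := hx
  have ht : t ≠ 0 := by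
    rintro rfl
    exact htx (zero_smul ℝ x)
  refine ⟨x + t⁻¹ • η, ⟨t, by rwa [smul_add, smul_inv_smul₀ ht]⟩, ?_⟩
  have hpos : 0 < ‖t‖ := norm_pos_iff.mpr ht
  rw [sub_add_cancel_left, norm_neg, norm_smul, norm_inv, inv_mul_lt_iff₀ hpos]
  rwa [norm_smul, mul_left_comm] at hη

lemma bddAbove_image_inner_sphK (g : EuclideanSpace ℝ (Fin n)) :
    BddAbove ((fun x => inner ℝ g x) '' sphK F k) :=
  bddAbove_image_inner_of_subset_closedBall g
    (Set.inter_subset_right.trans Metric.sphere_subset_closedBall)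

lemma sSup_image_inner_sphK_nonneg (g : EuclideanSpace ℝ (Fin n)) :
    0 ≤ sSup ((fun x => inner ℝ g x) '' sphK F k) :=
  sSup_image_inner_nonneg_of_neg_mem g (fun _ => neg_mem_sphK) (bddAbove_image_inner_sphK g)

lemma inner_le_sSup_image_sphK (g : EuclideanSpace ℝ (Fin n)) {p : EuclideanSpace ℝ (Fin n)}
    (hp : p ∈ coneC F k) (hp1 : ‖p‖ ≤ 1) :
    inner ℝ g p ≤ sSup ((fun x => inner ℝ g x) '' sphK F k) := by
  set S := sSup ((fun x => inner ℝ g x) '' sphK F k)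
  have hdir : inner ℝ g (‖p‖⁻¹ • p) ≤ S :=
    le_csSup (bddAbove_image_inner_sphK g) ⟨_, inv_norm_smul_mem_sphK hp, rfl⟩
  have hpos : 0 < ‖p‖ := norm_pos_iff.mpr (ne_zero_of_mem_coneC hp)
  calc inner ℝ g p = ‖p‖ * inner ℝ g (‖p‖⁻¹ • p) := by
        rw [real_inner_smul_right, mul_inv_cancel_left₀ hpos.ne']
    _ ≤ ‖p‖ * S := mul_le_mul_of_nonneg_left hdir hpos.le
    _ ≤ S := mul_le_of_le_one_left (sSup_image_inner_sphK_nonneg g) hp1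

end Cones

theorem stmt13_general {n : ℕ} (F : ℝ → ℝ) (k : ℕ)
    (d : ℝ) (hd : 0 < d) (g : EuclideanSpace ℝ (Fin n)) :
    sSup ((fun x => (inner ℝ g x : ℝ)) '' sphKd F k d) ≤
      d * ‖g‖ + sSup ((fun x => (inner ℝ g x : ℝ)) '' sphK F k) := by
  refine Real.sSup_le ?_ (add_nonneg (by positivity) (sSup_image_inner_sphK_nonneg g))
  rintro _ ⟨x, ⟨hxC, hx⟩, rfl⟩
  rw [mem_sphere_zero_iff_norm] at hx
  obtain ⟨v, hv, hxv⟩ := exists_mem_coneC_norm_sub_lt hxC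
  obtain ⟨s, hs, hsv, hxs⟩ :=
    exists_pos_smul_norm_le_one_norm_sub_le hx.le (ne_zero_of_mem_coneC hv)
  have hdist : ‖x - s • v‖ ≤ d := by linarith [hx ▸ hxv]
  calc inner ℝ g x = inner ℝ g (s • v) + inner ℝ g (x - s • v) := by
        rw [inner_sub_right]; ring
    _ ≤ sSup ((fun x => inner ℝ g x) '' sphK F k) + ‖g‖ * d :=
        add_le_add (inner_le_sSup_image_sphK g (smul_mem_coneC hv hs.ne') hsv)
          ((real_inner_le_norm g _).trans (mul_le_mul_of_nonneg_left hdist (norm_nonneg g)))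
    _ = d * ‖g‖ + sSup ((fun x => inner ℝ g x) '' sphK F k) := by ring

/-- inequality (47) in the escape-through-the-mesh analysis:
for every `g ∈ ℝⁿ`, `sup_{x ∈ K_d} ⟨g, x⟩ ≤ d ‖g‖ + sup_{x ∈ K} ⟨g, x⟩`, the suprema
being real suprema (`Real.sSup`, with `sSup ∅ = 0`). -/
theorem stmt13 {n : ℕ} (F : ℝ → ℝ) (hF : SparsenessMeasure F) (k : ℕ) (hk : 1 ≤ k)
    (d : ℝ) (hd : 0 < d) (g : EuclideanSpace ℝ (Fin n)) :
    sSup ((fun x => (inner ℝ g x : ℝ)) '' sphKd F k d) ≤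
      d * ‖g‖ + sSup ((fun x => (inner ℝ g x : ℝ)) '' sphK F k) :=
  stmt13_general F k d hd g
end
end
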